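/- arXiv:1509.07008 — 3 statements merged into one kernel-verified Lean document; each statement's English description precedes it below -/
import Mathlib

section
/- Let z₀ ∈ ℂ, m ≥ 1 an integer, and let F, G : ℂ → ℂ be analytic on a neighbourhood of z₀ such that all odd-order derivatives of orders 1, 3, …, 2m−1 of F and of G vanish at z₀. Then the (2m−1)-st derivative of the product F·G also vanishes at z₀, and consequently the function z ↦ F(z)·G(z)·(z−z₀)^{−2m} has zero residue at z₀: for every r > 0 such that F and G are analytic on the closed disc of radius r around z₀, one has ∮_{|z−z₀|=r} F(z)·G(z)·(z−z₀)^{−2m} dz = 0. (In particular, if ψ and φ are meromorphic near z₀ and both quasi-invariant at z₀ with multiplicity m, then Res_{z=z₀}(ψ·φ) = 0.) -/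
/-!
In each term of the Leibniz expansion of `(F * G)⁽²ᵐ⁻¹⁾(z₀)` one of the two orders `i`,
`2m - 1 - i` is odd, so every term vanishes. By the Cauchy integral formula the circle integral
equals `2πi / (2m - 1)!` times this derivative.
-/

open Metric

theorem iteratedDeriv_fun_mul_eq_zero_of_odd {𝕜 𝔸 : Type*} [NontriviallyNormedField 𝕜]
    [NormedRing 𝔸] [NormedAlgebra 𝕜 𝔸] {f g : 𝕜 → 𝔸} {x : 𝕜} {n : ℕ} (hn : Odd n)
    (hf : ContDiffAt 𝕜 n f x) (hg : ContDiffAt 𝕜 n g x)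
    (hf_odd : ∀ k ≤ n, Odd k → iteratedDeriv k f x = 0)
    (hg_odd : ∀ k ≤ n, Odd k → iteratedDeriv k g x = 0) :
    iteratedDeriv n (fun z => f z * g z) x = 0 := by
  rw [iteratedDeriv_fun_mul hf hg]
  refine Finset.sum_eq_zero fun i hi => ?_
  have hi : i ≤ n := Nat.lt_succ_iff.mp (Finset.mem_range.mp hi)
  rcases Nat.even_or_odd i with hi_even | hi_odd
  · have : Odd (n - i) := Nat.Odd.sub_even hi hn hi_even
    rw [hg_odd (n - i) (Nat.sub_le n i) this, mul_zero]
  · rw [hf_odd i hi hi_odd, mul_zero, zero_mul]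

theorem circleIntegral_div_sub_center_pow_eq_zero {f : ℂ → ℂ} {c : ℂ} {R : ℝ} (hR : 0 < R)
    (n : ℕ) (hf : DifferentiableOn ℂ f (closedBall c R)) (hn : iteratedDeriv n f c = 0) :
    (∮ z in C(c, R), f z / (z - c) ^ (n + 1)) = 0 := by
  have hcauchy := hf.circleIntegral_one_div_sub_center_pow_smul hR n
  rw [hn, smul_zero] at hcauchy
  simpa [div_eq_inv_mul] using hcauchy

/-- If `F`, `G` are analytic near `z₀` with all odd-order derivatives of
orders `1, 3, …, 2m−1` vanishing at `z₀`, then the `(2m−1)`-st derivative of `F·G`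
vanishes at `z₀`, and the circle integral of `F(z)·G(z)·(z−z₀)^{−2m}` over any circle
`|z−z₀| = r` on whose closed disc `F` and `G` are analytic is zero. -/
theorem stmt_0 (z₀ : ℂ) (m : ℕ) (hm : 1 ≤ m) (F G : ℂ → ℂ)
    (hF : AnalyticAt ℂ F z₀) (hG : AnalyticAt ℂ G z₀)
    (hFodd : ∀ j : ℕ, 1 ≤ j → j ≤ m → iteratedDeriv (2 * j - 1) F z₀ = 0)
    (hGodd : ∀ j : ℕ, 1 ≤ j → j ≤ m → iteratedDeriv (2 * j - 1) G z₀ = 0) :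
    iteratedDeriv (2 * m - 1) (fun z => F z * G z) z₀ = 0 ∧
      ∀ r : ℝ, 0 < r →
        (∀ z ∈ Metric.closedBall z₀ r, AnalyticAt ℂ F z) →
        (∀ z ∈ Metric.closedBall z₀ r, AnalyticAt ℂ G z) →
        (∮ z in C(z₀, r), F z * G z / (z - z₀) ^ (2 * m)) = 0 := by
  have odd_orders {H : ℂ → ℂ}
      (hH : ∀ j : ℕ, 1 ≤ j → j ≤ m → iteratedDeriv (2 * j - 1) H z₀ = 0) :
      ∀ k ≤ 2 * m - 1, Odd k → iteratedDeriv k H z₀ = 0 := by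
    rintro k hk ⟨j, rfl⟩
    have hj : 2 * (j + 1) - 1 = 2 * j + 1 := by omega
    simpa [hj] using hH (j + 1) (by omega) (by omega)
  have hodd : Odd (2 * m - 1) := ⟨m - 1, by omega⟩
  have hderiv := iteratedDeriv_fun_mul_eq_zero_of_odd hodd hF.contDiffAt hG.contDiffAt
    (odd_orders hFodd) (odd_orders hGodd)
  refine ⟨hderiv, fun r hr hFr hGr => ?_⟩
  have hdiff : DifferentiableOn ℂ (fun z => F z * G z) (closedBall z₀ r) := fun z hz =>
    ((hFr z hz).mul (hGr z hz)).differentiableAt.differentiableWithinAt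
  have hpow : 2 * m = 2 * m - 1 + 1 := by omega
  rw [hpow]
  exact circleIntegral_div_sub_center_pow_eq_zero hr _ hdiff hderiv
end

section
/- The subspace Q_λ is dense in Q_{λ,ℝ} with respect to the product ⟨·,·⟩: if p ∈ Q_{λ,ℝ} satisfies ⟨p,q⟩ = 0 for every q ∈ Q_λ (with any admissible ξ), then p = 0. -/
/-- Physicists' Hermite polynomials: `H 0 = 1`, `H (l+1) = 2·X·H l − (H l)'`. -/
noncomputable def Hpoly : ℕ → Polynomial ℂ
  | 0 => 1
  | (l + 1) => 2 * Polynomial.X * Hpoly l - Polynomial.derivative (Hpoly l)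

/-- The Wronskian `W_λ = Wr(H_{k_1},…,H_{k_n})`. -/
noncomputable def Wlam (n : ℕ) (k : Fin n → ℕ) : Polynomial ℂ :=
  Matrix.det (Matrix.of fun i j : Fin n => Polynomial.derivative^[(i : ℕ)] (Hpoly (k j)))

/-- The complex exceptional Hermite polynomial `H_{λ,l} = Wr(H_l, H_{k_1},…,H_{k_n})`. -/
noncomputable def Hexc (n : ℕ) (k : Fin n → ℕ) (l : ℕ) : Polynomial ℂ :=
  Matrix.det (Matrix.of fun i j : Fin (n + 1) =>
    Fin.cases (Polynomial.derivative^[(i : ℕ)] (Hpoly l))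
      (fun j' => Polynomial.derivative^[(i : ℕ)] (Hpoly (k j'))) j)

/-- `ψ` is quasi-invariant at `z₀` with multiplicity `m`: `(z−z₀)^m·ψ(z)` extends
analytically across `z₀` and all its odd-order derivatives of orders `1,3,…,2m−1`
vanish at `z₀`. -/
def QuasiInv (ψ : ℂ → ℂ) (z₀ : ℂ) (m : ℕ) : Prop :=
  ∃ F : ℂ → ℂ, AnalyticAt ℂ F z₀ ∧
    (∀ᶠ z in nhdsWithin z₀ {z₀}ᶜ, F z = (z - z₀) ^ m * ψ z) ∧
    ∀ j : ℕ, 1 ≤ j → j ≤ m → iteratedDeriv (2 * j - 1) F z₀ = 0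

/-- `Q_λ`: polynomials `p` with `p(z)·e^{−z²/2}/W_λ(z)` quasi-invariant at every zero
of `W_λ`, with the multiplicity of that zero. -/
def QlamSet (n : ℕ) (k : Fin n → ℕ) : Set (Polynomial ℂ) :=
  {p | ∀ z₀ : ℂ, (Wlam n k).eval z₀ = 0 →
    QuasiInv (fun z => Polynomial.eval z p * Complex.exp (-z ^ 2 / 2) /
        Polynomial.eval z (Wlam n k)) z₀ ((Wlam n k).rootMultiplicity z₀)}

/-- `Q_{λ,ℝ}`: as `Q_λ`, but quasi-invariance is required only at the real zeros. -/
def QlamRSet (n : ℕ) (k : Fin n → ℕ) : Set (Polynomial ℂ) :=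
  {p | ∀ z₀ : ℂ, z₀.im = 0 → (Wlam n k).eval z₀ = 0 →
    QuasiInv (fun z => Polynomial.eval z p * Complex.exp (-z ^ 2 / 2) /
        Polynomial.eval z (Wlam n k)) z₀ ((Wlam n k).rootMultiplicity z₀)}

/-- `ξ` is admissible: `0 < |ξ| < |Im z_i|` for every non-real zero `z_i` of `W_λ`. -/
def AdmXi (n : ℕ) (k : Fin n → ℕ) (ξ : ℝ) : Prop :=
  0 < |ξ| ∧ ∀ z₀ : ℂ, (Wlam n k).eval z₀ = 0 → z₀.im ≠ 0 → |ξ| < |z₀.im|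

/-- The sesquilinear product `⟨p,q⟩ = ∫_ℝ p(x+iξ)·\bar q(x+iξ)·e^{−(x+iξ)²}·W_λ(x+iξ)^{−2} dx`,
where `\bar q(z) = conj (q (conj z))` is the Schwarz conjugate. -/
noncomputable def hermProd (n : ℕ) (k : Fin n → ℕ) (ξ : ℝ) (p q : Polynomial ℂ) : ℂ :=
  ∫ x : ℝ, Polynomial.eval ((x : ℂ) + ξ * Complex.I) p *
      (starRingEnd ℂ) (Polynomial.eval ((starRingEnd ℂ) ((x : ℂ) + ξ * Complex.I)) q) *
      Complex.exp (-((x : ℂ) + ξ * Complex.I) ^ 2) /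
      (Polynomial.eval ((x : ℂ) + ξ * Complex.I) (Wlam n k)) ^ 2

/-!
For every polynomial `s`, `W_λ² s` lies in `Q_λ`: the associated `ψ = W_λ s e^{-z²/2}` is
entire, and `(z - z₀)^m ψ` vanishes to order `2m` at a zero `z₀` of multiplicity `m`. Testing
orthogonality against `q = W_λ² p`, and using that `W_λ` has real coefficients, gives
`∫ p(z) p̄(z) e^{-z²} dz = 0` along the line `Im z = ξ`, on which `W_λ` has no zeros.
Integrals of a polynomial times `e^{-z²}` do not depend on the horizontal line: every polynomial
is a constant plus `Q' - 2XQ`, and `(Q' - 2XQ) e^{-z²}` is the derivative of a function decaying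
at both ends. On the real line the integral is `∫ |p(x)|² e^{-x²} dx`, so `p = 0`.
-/

open Polynomial Complex ComplexConjugate MeasureTheory Filter Asymptotics Topology

lemma tendsto_eval_mul_cexp_quadratic_cocompact (P : ℂ[X]) {a : ℂ} (ha : a.re < 0) (b : ℂ) :
    Tendsto (fun x : ℝ => P.eval (x : ℂ) * cexp (a * x ^ 2 + b * x)) (cocompact ℝ) (𝓝 0) := by
  induction P using Polynomial.induction_on' with
  | add P Q hP hQ => simpa [add_mul] using hP.add hQ
  | monomial i r =>
    have hpow : (fun x : ℝ => (x : ℂ) ^ i) =O[cocompact ℝ] (fun x : ℝ => |x| ^ (i : ℝ)) :=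
      isBigO_of_le _ fun x => by simp [Real.rpow_natCast]
    have hone :
        (fun x : ℝ => |x| ^ (i : ℝ) * |x| ^ (-i : ℝ)) =ᶠ[cocompact ℝ] fun _ => 1 := by
      filter_upwards [(hasBasis_cocompact.mem_iff).mpr ⟨{0}, isCompact_singleton, subset_rfl⟩]
        with x hx
      rw [← Real.rpow_add (abs_pos.mpr hx), add_neg_cancel, Real.rpow_zero]
    have h := (hpow.mul_isLittleO
      (cexp_neg_quadratic_isLittleO_abs_rpow_cocompact ha b _)).congr' EventuallyEq.rfl hone
    simpa [mul_assoc] using ((isLittleO_one_iff ℝ).mp h).const_mul r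

lemma integrable_eval_mul_cexp_quadratic (P : ℂ[X]) {a : ℂ} (ha : a.re < 0) (b : ℂ) :
    Integrable (fun x : ℝ => P.eval (x : ℂ) * cexp (a * x ^ 2 + b * x)) := by
  have hsplit : ∀ x : ℝ, P.eval (x : ℂ) * cexp (a * x ^ 2 + b * x)
      = (P.eval (x : ℂ) * cexp (a / 2 * x ^ 2 + b * x)) * cexp (-(-a / 2) * x ^ 2) := by
    intro x
    rw [mul_assoc, ← Complex.exp_add]
    ring_nf
  have hdecay := tendsto_eval_mul_cexp_quadratic_cocompact P (a := a / 2) (by simp; linarith) b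
  have hO := (hdecay.isBigO_one ℂ).mul
    (isBigO_refl (fun x : ℝ => cexp (-(-a / 2) * x ^ 2)) (cocompact ℝ))
  simp only [one_mul, ← hsplit] at hO
  exact (Continuous.locallyIntegrable (by fun_prop)).integrable_of_isBigO_cocompact hO
    ((integrable_cexp_neg_mul_sq (by simpa using ha)).integrableAtFilter _)

lemma eval_add_mul_cexp_neg_sq_add (P : ℂ[X]) (c : ℂ) (x : ℝ) :
    P.eval (x + c) * cexp (-(x + c) ^ 2)
      = cexp (-c ^ 2) * ((P.comp (X + C c)).eval (x : ℂ) * cexp (-1 * x ^ 2 + -2 * c * x)) := by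
  rw [eval_comp, mul_left_comm, ← Complex.exp_add]
  simp only [eval_add, eval_X, eval_C]
  ring_nf

lemma integrable_eval_add_mul_cexp_neg_sq_add (P : ℂ[X]) (c : ℂ) :
    Integrable (fun x : ℝ => P.eval (x + c) * cexp (-(x + c) ^ 2)) := by
  simp only [eval_add_mul_cexp_neg_sq_add]
  exact (integrable_eval_mul_cexp_quadratic _ (by simp) _).const_mul _

lemma tendsto_eval_add_mul_cexp_neg_sq_add_cocompact (P : ℂ[X]) (c : ℂ) :
    Tendsto (fun x : ℝ => P.eval (x + c) * cexp (-(x + c) ^ 2)) (cocompact ℝ) (𝓝 0) := by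
  have h := (tendsto_eval_mul_cexp_quadratic_cocompact (P.comp (X + C c)) (a := -1) (by simp)
    (-2 * c)).const_mul (cexp (-c ^ 2))
  rw [mul_zero] at h
  exact h.congr fun x => (eval_add_mul_cexp_neg_sq_add P c x).symm

noncomputable def gaussDeriv : ℂ[X] →ₗ[ℂ] ℂ[X] :=
  derivative - LinearMap.mulLeft ℂ (2 * X)

lemma gaussDeriv_apply (P : ℂ[X]) : gaussDeriv P = derivative P - 2 * X * P := rfl

lemma hasDerivAt_eval_mul_cexp_neg_sq (P : ℂ[X]) (z : ℂ) :
    HasDerivAt (fun w => P.eval w * cexp (-w ^ 2)) ((gaussDeriv P).eval z * cexp (-z ^ 2)) z := by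
  refine ((P.hasDerivAt z).mul (hasDerivAt_pow 2 z).fun_neg.cexp).congr_deriv ?_
  simp only [gaussDeriv_apply, eval_sub, eval_mul, eval_X, eval_ofNat]
  ring

lemma integral_gaussDeriv_eval_add_mul_cexp_neg_sq_add (P : ℂ[X]) (c : ℂ) :
    ∫ x : ℝ, (gaussDeriv P).eval (x + c) * cexp (-(x + c) ^ 2) = 0 := by
  have hderiv : ∀ x : ℝ, HasDerivAt (fun x : ℝ => P.eval (x + c) * cexp (-(x + c) ^ 2))
      ((gaussDeriv P).eval (x + c) * cexp (-(x + c) ^ 2)) x := fun x =>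
    ((hasDerivAt_eval_mul_cexp_neg_sq P _).comp_add_const _ c).comp_ofReal
  have hlim := tendsto_eval_add_mul_cexp_neg_sq_add_cocompact P c
  simpa using integral_of_hasDerivAt_of_tendsto hderiv
    (integrable_eval_add_mul_cexp_neg_sq_add _ c) (hlim.mono_left atBot_le_cocompact)
    (hlim.mono_left atTop_le_cocompact)

lemma mem_span_one_sup_range_gaussDeriv (P : ℂ[X]) :
    P ∈ ℂ ∙ (1 : ℂ[X]) ⊔ LinearMap.range gaussDeriv := by
  set S := ℂ ∙ (1 : ℂ[X]) ⊔ LinearMap.range gaussDeriv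
  have hrange : ∀ Q, gaussDeriv Q ∈ S := fun Q => Submodule.mem_sup_right ⟨Q, rfl⟩
  have htwo : C (2⁻¹ : ℂ) * 2 = 1 := by
    rw [← map_ofNat C 2, ← C_mul, inv_mul_cancel₀ two_ne_zero, C_1]
  -- `X ^ (n + 2) = ((n + 1) X ^ n - gaussDeriv (X ^ (n + 1))) / 2`
  have hpow : ∀ n, (X : ℂ[X]) ^ n ∈ S := by
    intro n
    induction n using Nat.twoStepInduction with
    | zero => exact Submodule.mem_sup_left (Submodule.mem_span_singleton_self _)
    | one =>
      convert S.smul_mem (-2⁻¹ : ℂ) (hrange 1) using 1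
      simp only [pow_one, gaussDeriv_apply, derivative_one, mul_one, zero_sub, smul_neg, neg_smul,
        smul_eq_C_mul, neg_neg]
      linear_combination -X * htwo
    | more n hn _ =>
      convert S.sub_mem (S.smul_mem (2⁻¹ * (n + 1) : ℂ) hn)
        (S.smul_mem 2⁻¹ (hrange (X ^ (n + 1)))) using 1
      simp only [smul_eq_C_mul, map_mul, map_add, map_natCast, map_one, gaussDeriv_apply,
        derivative_X_pow_succ]
      linear_combination -X ^ (n + 2) * htwo
  induction P using Polynomial.induction_on' with
  | add P Q hP hQ => exact S.add_mem hP hQ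
  | monomial n r => simpa [← C_mul_X_pow_eq_monomial, smul_eq_C_mul] using S.smul_mem r (hpow n)

lemma integral_cexp_neg_sq_add (c : ℂ) :
    ∫ x : ℝ, cexp (-(x + c) ^ 2) = (Real.pi : ℂ) ^ (1 / 2 : ℂ) := by
  have h : ∀ x : ℝ, -((x : ℂ) + c) ^ 2 = -1 * (x : ℂ) ^ 2 + -2 * c * x + -c ^ 2 :=
    fun x => by ring
  simp_rw [h]
  rw [integral_cexp_quadratic (by simp), show -c ^ 2 - (-2 * c) ^ 2 / (4 * -1) = 0 by ring,
    Complex.exp_zero, mul_one, neg_neg, div_one]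

lemma integral_eval_add_mul_cexp_neg_sq_add (P : ℂ[X]) (c : ℂ) :
    ∫ x : ℝ, P.eval (x + c) * cexp (-(x + c) ^ 2)
      = ∫ x : ℝ, P.eval (x : ℂ) * cexp (-(x : ℂ) ^ 2) := by
  obtain ⟨_, hconst, _, ⟨Q, rfl⟩, rfl⟩ :=
    Submodule.mem_sup.mp (mem_span_one_sup_range_gaussDeriv P)
  obtain ⟨t, rfl⟩ := Submodule.mem_span_singleton.mp hconst
  have key : ∀ c : ℂ, ∫ x : ℝ, (t • 1 + gaussDeriv Q).eval (x + c) * cexp (-(x + c) ^ 2)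
      = t * (Real.pi : ℂ) ^ (1 / 2 : ℂ) := by
    intro c
    have hconst : Integrable fun x : ℝ => t * cexp (-(x + c) ^ 2) := by
      simpa using integrable_eval_add_mul_cexp_neg_sq_add (C t) c
    simp only [eval_add, eval_smul, eval_one, smul_eq_mul, mul_one, add_mul]
    rw [integral_add hconst (integrable_eval_add_mul_cexp_neg_sq_add _ c), integral_const_mul,
      integral_cexp_neg_sq_add, integral_gaussDeriv_eval_add_mul_cexp_neg_sq_add, add_zero]
  simpa using (key c).trans (key 0).symm

lemma conj_eval_conj (q : ℂ[X]) (z : ℂ) : conj (q.eval (conj z)) = (q.map conj).eval z := by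
  simpa using (eval_map_apply conj (conj z) (p := q)).symm

lemma eq_zero_of_integral_mul_map_conj_eval_mul_cexp_neg_sq (p : ℂ[X])
    (h : ∫ x : ℝ, (p * p.map conj).eval (x : ℂ) * cexp (-(x : ℂ) ^ 2) = 0) : p = 0 := by
  set g : ℝ → ℝ := fun x => normSq (p.eval (x : ℂ)) * Real.exp (-x ^ 2)
  have hg : ∀ x : ℝ, (p * p.map conj).eval (x : ℂ) * cexp (-(x : ℂ) ^ 2) = g x := by
    intro x
    rw [eval_mul, ← conj_eval_conj, conj_ofReal, mul_conj]
    simp [g]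
  have hg_nonneg : 0 ≤ g := fun x => mul_nonneg (normSq_nonneg _) (Real.exp_pos _).le
  have hg_int : Integrable g := by
    have := (integrable_eval_add_mul_cexp_neg_sq_add (p * p.map conj) 0).norm
    simp only [add_zero, hg, norm_real, Real.norm_eq_abs] at this
    exact this.congr (Eventually.of_forall fun x => abs_of_nonneg (hg_nonneg x))
  have hg_zero : g = 0 := by
    have hg_cont : Continuous g := by fun_prop
    refine (hg_cont.ae_eq_iff_eq volume continuous_const).mp
      ((integral_eq_zero_iff_of_nonneg hg_nonneg hg_int).mp ?_)
    have : ((∫ x, g x : ℝ) : ℂ) = 0 := by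
      rw [← integral_complex_ofReal]
      simp_rw [← hg]
      exact h
    exact_mod_cast this
  refine eq_zero_of_infinite_isRoot p
    (Set.infinite_of_injective_forall_mem ofReal_injective fun x => ?_)
  simpa [g, Real.exp_ne_zero] using congrFun hg_zero x

lemma iteratedDeriv_eq_zero_of_eventuallyEq_pow_mul {𝕜 : Type*} [NontriviallyNormedField 𝕜]
    [CharZero 𝕜] [CompleteSpace 𝕜] {f g : 𝕜 → 𝕜} {z₀ : 𝕜} {n i : ℕ}
    (hg : AnalyticAt 𝕜 g z₀) (hfg : ∀ᶠ z in 𝓝 z₀, f z = (z - z₀) ^ n * g z) (hi : i < n) :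
    iteratedDeriv i f z₀ = 0 := by
  have hf : AnalyticAt 𝕜 f z₀ :=
    (by fun_prop : AnalyticAt 𝕜 (fun z => (z - z₀) ^ n * g z) z₀).congr
      (hfg.mono fun _ h => h.symm)
  exact (natCast_le_analyticOrderAt_iff_iteratedDeriv_eq_zero hf).mp
    ((natCast_le_analyticOrderAt hf).mpr ⟨g, hg, hfg⟩) i hi

lemma quasiInv_eval_sq_mul_div (W s : ℂ[X]) (z₀ : ℂ) :
    QuasiInv (fun z => (W ^ 2 * s).eval z * cexp (-z ^ 2 / 2) / W.eval z) z₀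
      (W.rootMultiplicity z₀) := by
  set m := W.rootMultiplicity z₀
  obtain ⟨g, hg⟩ := W.pow_rootMultiplicity_dvd z₀
  have hWeval : ∀ z, W.eval z = (z - z₀) ^ m * g.eval z := fun z => by
    conv_lhs => rw [hg]
    simp [m]
  -- at a zero of `W` both sides vanish, the left one because `x / 0 = 0`
  have hψ : ∀ z, (W ^ 2 * s).eval z * cexp (-z ^ 2 / 2) / W.eval z
      = W.eval z * (s.eval z * cexp (-z ^ 2 / 2)) := by
    intro z
    rcases eq_or_ne (W.eval z) 0 with h | h
    · simp [h]
    · simp only [eval_mul, eval_pow]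
      field_simp
  have hfactor : ∀ z, (z - z₀) ^ m * ((W ^ 2 * s).eval z * cexp (-z ^ 2 / 2) / W.eval z)
      = (z - z₀) ^ (2 * m) * (g.eval z * s.eval z * cexp (-z ^ 2 / 2)) := by
    intro z
    rw [hψ, hWeval]
    ring
  have hentire : Differentiable ℂ fun z => g.eval z * s.eval z * cexp (-z ^ 2 / 2) := by
    fun_prop
  refine ⟨fun z => (z - z₀) ^ (2 * m) * (g.eval z * s.eval z * cexp (-z ^ 2 / 2)),
    (by fun_prop : Differentiable ℂ _).analyticAt z₀,
    Eventually.of_forall fun z => (hfactor z).symm, fun j _ hjm => ?_⟩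
  exact iteratedDeriv_eq_zero_of_eventuallyEq_pow_mul (hentire.analyticAt z₀)
    (Eventually.of_forall fun _ => rfl) (by omega)

lemma sq_mul_mem_QlamSet (n : ℕ) (k : Fin n → ℕ) (s : ℂ[X]) :
    Wlam n k ^ 2 * s ∈ QlamSet n k :=
  fun z₀ _ => quasiInv_eval_sq_mul_div _ s z₀

lemma map_conj_Hpoly (l : ℕ) : (Hpoly l).map conj = Hpoly l := by
  induction l with
  | zero => simp [Hpoly]
  | succ l ih => simp [Hpoly, Polynomial.map_sub, ← derivative_map, ih]

lemma map_conj_Wlam (n : ℕ) (k : Fin n → ℕ) : (Wlam n k).map conj = Wlam n k := by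
  rw [Wlam, ← coe_mapRingHom, RingHom.map_det]
  congr 1
  ext i j
  simp [← iterate_derivative_map, map_conj_Hpoly]

lemma hermProd_sq_mul (n : ℕ) (k : Fin n → ℕ) (ξ : ℝ) (p : ℂ[X])
    (hW : ∀ x : ℝ, (Wlam n k).eval (x + ξ * I) ≠ 0) :
    hermProd n k ξ p (Wlam n k ^ 2 * p)
      = ∫ x : ℝ, (p * p.map conj).eval (x + ξ * I) * cexp (-(x + ξ * I) ^ 2) := by
  refine integral_congr_ae (Eventually.of_forall fun x => ?_)
  have := hW x
  dsimp only
  rw [conj_eval_conj]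
  simp only [Polynomial.map_mul, Polynomial.map_pow, map_conj_Wlam, eval_mul, eval_pow]
  field_simp

theorem stmt_4_general (n : ℕ) (k : Fin n → ℕ)
    (p : Polynomial ℂ)
    (ξ : ℝ) (hξ : AdmXi n k ξ)
    (horth : ∀ q ∈ QlamSet n k, hermProd n k ξ p q = 0) :
    p = 0 := by
  have hW : ∀ x : ℝ, (Wlam n k).eval (x + ξ * I) ≠ 0 := fun x hx => by
    simpa using hξ.2 _ hx (by simpa using abs_pos.mp hξ.1)
  apply eq_zero_of_integral_mul_map_conj_eval_mul_cexp_neg_sq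
  rw [← integral_eval_add_mul_cexp_neg_sq_add _ (ξ * I), ← hermProd_sq_mul n k ξ p hW]
  exact horth _ (sq_mul_mem_QlamSet n k p)

/-- `Q_λ` is dense in `Q_{λ,ℝ}`: if `p ∈ Q_{λ,ℝ}` is orthogonal to every
`q ∈ Q_λ`, then `p = 0`. -/
theorem stmt_4 (n : ℕ) (k : Fin n → ℕ) (hk : StrictAnti k)
    (p : Polynomial ℂ) (hp : p ∈ QlamRSet n k)
    (ξ : ℝ) (hξ : AdmXi n k ξ)
    (horth : ∀ q ∈ QlamSet n k, hermProd n k ξ p q = 0) :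
    p = 0 :=
  stmt_4_general n k p ξ hξ horth
end

section
/- The codimension of Q_λ in Q_{λ,ℝ} equals |λ| − Σ_{z_i ∈ Z_λ^ℝ} m_i, i.e. the dimension of the quotient vector space Q_{λ,ℝ}/Q_λ equals the degree |λ| of W_λ minus the total multiplicity of the real zeros of W_λ (equivalently, the total multiplicity of the non-real zeros of W_λ). -/
/-!
Write `W = (X - z)^m · u_z` at a root `z` of multiplicity `m`. Then `p e^{-z²/2}/W` is
quasi-invariant at `z` iff the odd derivatives of order `< 2m` at `z` of the function
`p e^{-z²/2}/u_z`, analytic near `z`, vanish: `m` linear conditions on `p`. Hence `Q_{λ,ℝ}/Q_λ`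
embeds into `ℂ^N`, where `N` counts the conditions at the non-real roots, i.e. their total
multiplicity. The embedding is onto: `(X - z)^(2j-1) ∏_{w ≠ z} (X - w)^(2 m_w)` satisfies all
conditions at the other roots and those of order `< 2j - 1` at `z`, but not the one of order
`2j - 1`, so the system is triangular. That `W_λ ≠ 0` comes from its top coefficient, a
Vandermonde determinant in the distinct degrees `k_i`.
-/

open Polynomial Filter Topology

theorem Polynomial.coeff_prod_of_natDegree_le_sum {R ι : Type*} [CommSemiring R] (s : Finset ι)
    (f : ι → R[X]) (d : ι → ℕ) (h : ∀ i ∈ s, (f i).natDegree ≤ d i) :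
    (∏ i ∈ s, f i).coeff (∑ i ∈ s, d i) = ∏ i ∈ s, (f i).coeff (d i) := by
  classical
  induction s using Finset.induction_on with
  | empty => simp
  | insert a s ha ih =>
    rw [Finset.prod_insert ha, Finset.sum_insert ha, Finset.prod_insert ha,
      coeff_mul_add_eq_of_natDegree_le (h a (Finset.mem_insert_self a s))
        ((natDegree_prod_le _ _).trans (Finset.sum_le_sum fun i hi =>
          h i (Finset.mem_insert_of_mem hi))),
      ih fun i hi => h i (Finset.mem_insert_of_mem hi)]

theorem coeff_det_iterate_derivative {R : Type*} [CommRing R] {n : ℕ} (f : Fin n → R[X])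
    (d : Fin n → ℕ) (hf : ∀ j, (f j).natDegree ≤ d j) :
    (Matrix.of fun i j : Fin n => derivative^[i] (f j)).det.coeff
        (∑ j, d j - ∑ i : Fin n, (i : ℕ)) =
      (Matrix.of fun i j : Fin n => ((d j).descFactorial i : R) * (f j).coeff (d j)).det := by
  simp only [Matrix.det_apply, finsetSum_coeff, Units.smul_def, coeff_smul, Matrix.of_apply]
  refine Finset.sum_congr rfl fun σ _ => congrArg _ ?_
  by_cases hσ : ∀ i, (σ i : ℕ) ≤ d i
  · have hdeg : ∑ j, d j - ∑ i : Fin n, (i : ℕ) = ∑ i, (d i - σ i) := by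
      rw [Finset.sum_tsub_distrib _ fun i _ => hσ i, Equiv.sum_comp σ (fun i : Fin n => (i : ℕ))]
    rw [hdeg, coeff_prod_of_natDegree_le_sum _ _ _ fun i _ =>
      (natDegree_iterate_derivative _ _).trans (Nat.sub_le_sub_right (hf i) _)]
    refine Finset.prod_congr rfl fun i _ => ?_
    rw [coeff_iterate_derivative, Nat.sub_add_cancel (hσ i), nsmul_eq_mul]
  · obtain ⟨i, hi⟩ := not_forall.mp hσ
    rw [Finset.prod_eq_zero (Finset.mem_univ i) (iterate_derivative_eq_zero (by grind)),
      Finset.prod_eq_zero (Finset.mem_univ i)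
        (by rw [Nat.descFactorial_eq_zero_iff_lt.mpr (by omega), Nat.cast_zero, zero_mul]),
      coeff_zero]

theorem det_descFactorial_ne_zero {K : Type*} [Field K] [CharZero K] {n : ℕ} {d : Fin n → ℕ}
    (hd : Function.Injective d) :
    (Matrix.of fun i j : Fin n => ((d j).descFactorial i : K)).det ≠ 0 := by
  rw [← Matrix.det_transpose]
  have hV := Matrix.det_eval_matrixOfPolynomials_eq_det_vandermonde (fun j => (d j : K))
    (fun i : Fin n => descPochhammer K i) (fun i => descPochhammer_natDegree _ _)
    (fun i => monic_descPochhammer _ _)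
  simp only [descPochhammer_eval_eq_descFactorial] at hV
  rw [show Matrix.transpose (Matrix.of fun i j : Fin n => ((d j).descFactorial i : K)) =
    Matrix.of fun i j : Fin n => ((d i).descFactorial j : K) from rfl, ← hV,
    Matrix.det_vandermonde_ne_zero_iff]
  exact Nat.cast_injective.comp hd

theorem det_iterate_derivative_ne_zero {K : Type*} [Field K] [CharZero K] {n : ℕ}
    (f : Fin n → K[X]) (hf0 : ∀ j, f j ≠ 0) (hf : Function.Injective (natDegree ∘ f)) :
    (Matrix.of fun i j : Fin n => derivative^[i] (f j)).det ≠ 0 := by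
  intro h
  have hcoeff := coeff_det_iterate_derivative f (natDegree ∘ f) fun j => le_rfl
  have hsplit : (Matrix.of fun i j : Fin n =>
      ((f j).natDegree.descFactorial i : K) * (f j).coeff (f j).natDegree) =
      Matrix.of (fun i j : Fin n => ((f j).natDegree.descFactorial i : K)) *
        Matrix.diagonal fun j => (f j).leadingCoeff := by
    ext i j
    rw [Matrix.mul_diagonal, Matrix.of_apply, Matrix.of_apply, leadingCoeff]
  rw [h, coeff_zero, Function.comp_def, hsplit, Matrix.det_mul, Matrix.det_diagonal] at hcoeff
  exact mul_ne_zero (det_descFactorial_ne_zero hf)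
    (Finset.prod_ne_zero_iff.mpr fun j _ => leadingCoeff_ne_zero.mpr (hf0 j)) hcoeff.symm

theorem Hpoly_natDegree_le (l : ℕ) : (Hpoly l).natDegree ≤ l := by
  induction l with
  | zero => simp [Hpoly]
  | succ l ih =>
    rw [Hpoly]
    refine (natDegree_sub_le _ _).trans (max_le ?_ ((natDegree_derivative_le _).trans (by omega)))
    exact (natDegree_mul_le_of_le (by compute_degree) ih).trans_eq (add_comm 1 l)

theorem Hpoly_coeff_self (l : ℕ) : (Hpoly l).coeff l = 2 ^ l := by
  induction l with
  | zero => simp [Hpoly]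
  | succ l ih =>
    have hder : (derivative (Hpoly l)).coeff (l + 1) = 0 :=
      coeff_eq_zero_of_natDegree_lt ((natDegree_derivative_le _).trans_lt
        (by have := Hpoly_natDegree_le l; omega))
    rw [Hpoly, coeff_sub, hder, sub_zero, mul_assoc, ← C_ofNat, coeff_C_mul, coeff_X_mul, ih,
      pow_succ']

theorem Hpoly_natDegree (l : ℕ) : (Hpoly l).natDegree = l :=
  natDegree_eq_of_le_of_coeff_ne_zero (Hpoly_natDegree_le l)
    (by rw [Hpoly_coeff_self]; exact pow_ne_zero l two_ne_zero)

theorem Hpoly_ne_zero (l : ℕ) : Hpoly l ≠ 0 := fun h =>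
  pow_ne_zero l (two_ne_zero' ℂ) (by rw [← Hpoly_coeff_self, h, coeff_zero])

theorem Wlam_ne_zero {n : ℕ} {k : Fin n → ℕ} (hk : Function.Injective k) : Wlam n k ≠ 0 :=
  det_iterate_derivative_ne_zero _ (fun j => Hpoly_ne_zero (k j))
    (by simpa only [Function.comp_def, Hpoly_natDegree] using hk)

theorem Submodule.eq_top_of_triangular {ι K : Type*} [Fintype ι] [DecidableEq ι] [Field K]
    (V : Submodule K (ι → K)) (f : ι → ℕ)
    (hV : ∀ i, ∃ v ∈ V, v i ≠ 0 ∧ ∀ j ≠ i, f i ≤ f j → v j = 0) : V = ⊤ := by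
  have hsingle : ∀ N, ∀ i, f i = N → Pi.single i 1 ∈ V := by
    intro N
    induction N using Nat.strong_induction_on with
    | _ N ih =>
      rintro i rfl
      obtain ⟨v, hv, hvi, hvj⟩ := hV i
      have hdecomp : v i • Pi.single i (1 : K) =
          v - ∑ j ∈ Finset.univ.erase i, v j • Pi.single j 1 := by
        rw [eq_sub_iff_add_eq,
          Finset.add_sum_erase _ (fun j => v j • Pi.single j (1 : K)) (Finset.mem_univ i)]
        ext k
        simp [Finset.sum_apply, Pi.single_apply]
      rw [← inv_smul_smul₀ hvi (Pi.single i 1), hdecomp]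
      refine V.smul_mem _ (V.sub_mem hv (V.sum_mem fun j hj => ?_))
      by_cases hfj : f i ≤ f j
      · rw [hvj j (Finset.ne_of_mem_erase hj) hfj, zero_smul]
        exact V.zero_mem
      · exact V.smul_mem _ (ih (f j) (by omega) j rfl)
  rw [eq_top_iff, ← (Pi.basisFun K ι).span_eq, Submodule.span_le]
  rintro _ ⟨i, rfl⟩
  rw [SetLike.mem_coe, Pi.basisFun_apply]
  exact hsingle _ i rfl

theorem iteratedDeriv_sub_pow_mul {𝕜 : Type*} [NontriviallyNormedField 𝕜] {f : 𝕜 → 𝕜} {x : 𝕜}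
    {r : ℕ} (hf : ContDiffAt 𝕜 r f x) (t : ℕ) :
    iteratedDeriv r (fun y => (y - x) ^ t * f y) x =
      r.choose t * t.factorial * iteratedDeriv (r - t) f x := by
  have hpow (i : ℕ) :
      iteratedDeriv i (fun y => (y - x) ^ t) x = if i = t then (t.factorial : 𝕜) else 0 := by
    rw [congrFun (iteratedDeriv_comp_sub_const i (fun y : 𝕜 => y ^ t) x) x, sub_self,
      iteratedDeriv_fun_pow_zero, Nat.cast_ite, Nat.cast_zero]
  rw [iteratedDeriv_fun_mul (by fun_prop) hf]
  simp only [hpow, mul_ite, ite_mul, mul_zero, zero_mul, Finset.sum_ite_eq', Finset.mem_range]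
  split_ifs with ht
  · rfl
  · rw [Nat.choose_eq_zero_of_lt (by omega), Nat.cast_zero, zero_mul, zero_mul]

theorem quasiInv_iff_of_eventuallyEq {ψ G : ℂ → ℂ} {z₀ : ℂ} {m : ℕ} (hG : AnalyticAt ℂ G z₀)
    (hGψ : ∀ᶠ z in 𝓝[≠] z₀, G z = (z - z₀) ^ m * ψ z) :
    QuasiInv ψ z₀ m ↔ ∀ j, 1 ≤ j → j ≤ m → iteratedDeriv (2 * j - 1) G z₀ = 0 := by
  refine ⟨fun ⟨F, hF, hFψ, hFodd⟩ j hj1 hj2 => ?_, fun h => ⟨G, hG, hGψ, h⟩⟩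
  have hFG : F =ᶠ[𝓝 z₀] G :=
    (hF.continuousAt.eventuallyEq_nhds_iff_eventuallyEq_nhdsNE hG.continuousAt).mp
      (hFψ.mp (hGψ.mono fun z hG hF => hF.trans hG.symm))
  rw [← hFG.iteratedDeriv_eq]
  exact hFodd j hj1 hj2

theorem Polynomial.analyticAt_eval (p : ℂ[X]) (z : ℂ) : AnalyticAt ℂ (fun w => eval w p) z :=
  AnalyticOnNhd.eval_polynomial p z trivial

noncomputable def Polynomial.rootCofactor (W : ℂ[X]) (z₀ : ℂ) : ℂ[X] :=
  W /ₘ (X - C z₀) ^ W.rootMultiplicity z₀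

theorem quasiInv_div_iff {W : ℂ[X]} (hW : W ≠ 0) {f : ℂ → ℂ} {z₀ : ℂ} (hf : AnalyticAt ℂ f z₀) :
    QuasiInv (fun z => f z / eval z W) z₀ (W.rootMultiplicity z₀) ↔
      ∀ j, 1 ≤ j → j ≤ W.rootMultiplicity z₀ →
        iteratedDeriv (2 * j - 1) (fun z => f z / eval z (W.rootCofactor z₀)) z₀ = 0 := by
  have hu := eval_divByMonic_pow_rootMultiplicity_ne_zero z₀ hW
  refine quasiInv_iff_of_eventuallyEq (hf.div (analyticAt_eval _ z₀) hu) ?_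
  have hu' : ∀ᶠ z in 𝓝[≠] z₀, eval z (W.rootCofactor z₀) ≠ 0 :=
    eventually_nhdsWithin_of_eventually_nhds ((analyticAt_eval _ z₀).continuousAt.eventually_ne hu)
  filter_upwards [hu', self_mem_nhdsWithin] with z hz hne
  have hWz : eval z W = (z - z₀) ^ W.rootMultiplicity z₀ * eval z (W.rootCofactor z₀) := by
    conv_lhs => rw [← pow_mul_divByMonic_rootMultiplicity_eq W z₀]
    simp only [eval_mul, eval_pow, eval_sub, eval_X, eval_C, rootCofactor]
  have : z - z₀ ≠ 0 := sub_ne_zero.mpr hne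
  rw [hWz]
  field_simp

noncomputable def weightedJet {h : ℂ → ℂ} {z : ℂ} (hh : AnalyticAt ℂ h z) (r : ℕ) :
    ℂ[X] →ₗ[ℂ] ℂ where
  toFun p := iteratedDeriv r (fun w => eval w p * h w) z
  map_add' p q := by
    simp only [eval_add, add_mul]
    exact iteratedDeriv_fun_add ((analyticAt_eval p z).mul hh).contDiffAt
      ((analyticAt_eval q z).mul hh).contDiffAt
  map_smul' c p := by
    simp only [eval_smul, smul_eq_mul, mul_assoc, RingHom.id_apply]
    exact iteratedDeriv_const_mul_field c _

section weightedJet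

variable {h : ℂ → ℂ} {z : ℂ} (hh : AnalyticAt ℂ h z)

theorem weightedJet_apply (r : ℕ) (p : ℂ[X]) :
    weightedJet hh r p = iteratedDeriv r (fun w => eval w p * h w) z := rfl

theorem weightedJet_X_sub_C_pow_mul (r t : ℕ) (q : ℂ[X]) :
    weightedJet hh r ((X - C z) ^ t * q) =
      r.choose t * t.factorial * iteratedDeriv (r - t) (fun w => eval w q * h w) z := by
  have hq : ContDiffAt ℂ r (fun w => eval w q * h w) z :=
    ((analyticAt_eval q z).mul hh).contDiffAt
  rw [weightedJet_apply, ← iteratedDeriv_sub_pow_mul hq]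
  simp only [eval_mul, eval_pow, eval_sub, eval_X, eval_C, mul_assoc]

theorem weightedJet_eq_zero_of_dvd {r t : ℕ} {p : ℂ[X]} (hp : (X - C z) ^ t ∣ p) (hr : r < t) :
    weightedJet hh r p = 0 := by
  obtain ⟨q, rfl⟩ := hp
  rw [weightedJet_X_sub_C_pow_mul, Nat.choose_eq_zero_of_lt hr, Nat.cast_zero, zero_mul, zero_mul]

theorem weightedJet_X_sub_C_pow_mul_self (t : ℕ) (q : ℂ[X]) :
    weightedJet hh t ((X - C z) ^ t * q) = t.factorial * (eval z q * h z) := by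
  rw [weightedJet_X_sub_C_pow_mul, Nat.choose_self, Nat.sub_self, iteratedDeriv_zero,
    Nat.cast_one, one_mul]

end weightedJet

def quasiInvariantSet (W : ℂ[X]) (g : ℂ → ℂ) (S : Set ℂ) : Set ℂ[X] :=
  {p | ∀ z ∈ S, eval z W = 0 →
    QuasiInv (fun w => eval w p * g w / eval w W) z (W.rootMultiplicity z)}

noncomputable def jetIndex (W : ℂ[X]) (S : Set ℂ) : Finset (Σ _ : ℂ, ℕ) :=
  open Classical in
  (W.roots.toFinset.filter (· ∈ S)).sigma fun z => Finset.Icc 1 (W.rootMultiplicity z)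

section QuasiInvariants

variable {W : ℂ[X]} {g : ℂ → ℂ}

theorem analyticAt_div_rootCofactor (hW : W ≠ 0) (hg : Differentiable ℂ g) (z : ℂ) :
    AnalyticAt ℂ (fun w => g w / eval w (W.rootCofactor z)) z :=
  (hg.analyticAt z).div (analyticAt_eval _ z) (eval_divByMonic_pow_rootMultiplicity_ne_zero z hW)

/-- The condition of index `(z, j)`: the `(2j-1)`-st derivative at `z` of the analytic
extension of `(w - z) ^ mult z · p g / W`. -/
noncomputable def oddJet (hW : W ≠ 0) (hg : Differentiable ℂ g) (i : Σ _ : ℂ, ℕ) : ℂ[X] →ₗ[ℂ] ℂ :=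
  weightedJet (analyticAt_div_rootCofactor hW hg i.1) (2 * i.2 - 1)

noncomputable def jetConditions (hW : W ≠ 0) (hg : Differentiable ℂ g)
    (T : Finset (Σ _ : ℂ, ℕ)) : ℂ[X] →ₗ[ℂ] (T → ℂ) :=
  LinearMap.pi fun i => oddJet hW hg i.1

theorem mem_jetIndex (hW : W ≠ 0) {S : Set ℂ} {i : Σ _ : ℂ, ℕ} :
    i ∈ jetIndex W S ↔
      i.1 ∈ S ∧ eval i.1 W = 0 ∧ 1 ≤ i.2 ∧ i.2 ≤ W.rootMultiplicity i.1 := by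
  simp [jetIndex, mem_roots hW, and_comm, and_assoc]

open Classical in
theorem card_jetIndex (S : Set ℂ) :
    (jetIndex W S).card = Multiset.card (W.roots.filter (· ∈ S)) := by
  rw [jetIndex, Finset.card_sigma, ← Multiset.toFinset_sum_count_eq, Multiset.toFinset_filter]
  refine Finset.sum_congr rfl fun z hz => ?_
  rw [Nat.card_Icc, Nat.add_sub_cancel, Multiset.count_filter_of_pos (Finset.mem_filter.mp hz).2,
    count_roots]

theorem mem_ker_jetConditions (hW : W ≠ 0) (hg : Differentiable ℂ g)
    {T : Finset (Σ _ : ℂ, ℕ)} {p : ℂ[X]} :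
    p ∈ LinearMap.ker (jetConditions hW hg T) ↔ ∀ i ∈ T, oddJet hW hg i p = 0 := by
  simp [jetConditions, funext_iff]

theorem quasiInvariantSet_eq_ker (hW : W ≠ 0) (hg : Differentiable ℂ g) (S : Set ℂ) :
    quasiInvariantSet W g S = LinearMap.ker (jetConditions hW hg (jetIndex W S)) := by
  ext p
  have hψ (z : ℂ) :
      QuasiInv (fun w => eval w p * g w / eval w W) z (W.rootMultiplicity z) ↔
        ∀ j, 1 ≤ j → j ≤ W.rootMultiplicity z → iteratedDeriv (2 * j - 1)
          (fun w => eval w p * (g w / eval w (W.rootCofactor z))) z = 0 := by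
    simpa only [mul_div_assoc] using quasiInv_div_iff hW (f := fun w => eval w p * g w)
      ((analyticAt_eval p z).mul (hg.analyticAt z))
  simp only [quasiInvariantSet, Set.mem_ofPred_eq, hψ, SetLike.mem_coe, mem_ker_jetConditions,
    mem_jetIndex hW, Sigma.forall, and_imp, oddJet, weightedJet_apply]
  exact ⟨fun h z j hz h0 => h z hz h0 j, fun h z hz h0 j => h z j hz h0⟩

theorem exists_oddJet_triangular (hW : W ≠ 0) (hg : Differentiable ℂ g) (hg0 : ∀ z, g z ≠ 0)
    (z : ℂ) (j : ℕ) :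
    ∃ P : ℂ[X], oddJet hW hg ⟨z, j⟩ P ≠ 0 ∧
      ∀ i ∈ jetIndex W Set.univ, (i.1 ≠ z ∨ i.2 < j) → oddJet hW hg i P = 0 := by
  classical
  set Q := ∏ w ∈ W.roots.toFinset.erase z, (X - C w) ^ (2 * W.rootMultiplicity w)
  refine ⟨(X - C z) ^ (2 * j - 1) * Q, ?_, ?_⟩
  · have hQ : eval z Q ≠ 0 := by
      rw [eval_prod]
      refine Finset.prod_ne_zero_iff.mpr fun w hw => ?_
      rw [eval_pow, eval_sub, eval_X, eval_C]
      exact pow_ne_zero _ (sub_ne_zero.mpr (Finset.ne_of_mem_erase hw).symm)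
    rw [oddJet, weightedJet_X_sub_C_pow_mul_self]
    exact mul_ne_zero (Nat.cast_ne_zero.mpr (Nat.factorial_ne_zero _)) (mul_ne_zero hQ
      (div_ne_zero (hg0 z) (eval_divByMonic_pow_rootMultiplicity_ne_zero z hW)))
  · rintro ⟨w, j'⟩ hi hne
    obtain ⟨-, hw, hj1, hj2⟩ := (mem_jetIndex hW).mp hi
    dsimp only at hw hj1 hj2 hne
    by_cases hwz : w = z
    · subst hwz
      simp only [ne_eq, not_true_eq_false, false_or] at hne
      exact weightedJet_eq_zero_of_dvd _ (dvd_mul_right _ _) (by dsimp only; omega)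
    · refine weightedJet_eq_zero_of_dvd _ (t := 2 * W.rootMultiplicity w)
        (dvd_mul_of_dvd_right (Finset.dvd_prod_of_mem _ ?_) _) (by dsimp only; omega)
      exact Finset.mem_erase.mpr ⟨hwz, Multiset.mem_toFinset.mpr ((mem_roots hW).mpr hw)⟩

theorem jetIndex_univ (hW : W ≠ 0) (S : Set ℂ) :
    jetIndex W Set.univ = jetIndex W S ∪ jetIndex W Sᶜ := by
  ext i
  simp only [Finset.mem_union, mem_jetIndex hW, Set.mem_univ, Set.mem_compl_iff, true_and]
  tauto

theorem range_jetConditions_compl_eq_top (hW : W ≠ 0) (hg : Differentiable ℂ g)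
    (hg0 : ∀ z, g z ≠ 0) (S : Set ℂ) :
    LinearMap.range ((jetConditions hW hg (jetIndex W Sᶜ)).comp
      (LinearMap.ker (jetConditions hW hg (jetIndex W S))).subtype) = ⊤ := by
  refine Submodule.eq_top_of_triangular _ (fun i => W.rootMultiplicity i.1.1 - i.1.2)
    fun ⟨⟨z, j⟩, hi⟩ => ?_
  obtain ⟨hzS, -, -, hj⟩ := (mem_jetIndex hW).mp hi
  obtain ⟨P, hPz, hP⟩ := exists_oddJet_triangular hW hg hg0 z j
  have hPS : P ∈ LinearMap.ker (jetConditions hW hg (jetIndex W S)) :=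
    (mem_ker_jetConditions hW hg).mpr fun i hi => hP i
      (jetIndex_univ hW S ▸ Finset.mem_union_left _ hi)
      (Or.inl fun h => hzS (h ▸ ((mem_jetIndex hW).mp hi).1))
  set v := (jetConditions hW hg (jetIndex W Sᶜ)).comp
    (LinearMap.ker (jetConditions hW hg (jetIndex W S))).subtype ⟨P, hPS⟩
  have hv (i : jetIndex W Sᶜ) : v i = oddJet hW hg i.1 P := rfl
  refine ⟨v, LinearMap.mem_range_self _ _, by rwa [hv], fun i hne hle => ?_⟩
  obtain ⟨⟨w, j'⟩, hi'⟩ := i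
  rw [hv]
  refine hP _ (jetIndex_univ hW S ▸ Finset.mem_union_right _ hi') ?_
  obtain ⟨-, -, -, hj'⟩ := (mem_jetIndex hW).mp hi'
  dsimp only at hj hj' hle ⊢
  by_contra! h
  obtain ⟨rfl, hjj⟩ := h
  obtain rfl : j' = j := by omega
  exact hne rfl

open Classical in
theorem finrank_quasiInvariantSet_quotient (hW : W ≠ 0) (hg : Differentiable ℂ g)
    (hg0 : ∀ z, g z ≠ 0) (S : Set ℂ) :
    Module.finrank ℂ (↥(Submodule.span ℂ (quasiInvariantSet W g S)) ⧸
      Submodule.comap (Submodule.span ℂ (quasiInvariantSet W g S)).subtype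
        (Submodule.span ℂ (quasiInvariantSet W g Set.univ))) =
      Multiset.card (W.roots.filter (· ∉ S)) := by
  rw [quasiInvariantSet_eq_ker hW hg, quasiInvariantSet_eq_ker hW hg, Submodule.span_eq,
    Submodule.span_eq]
  set B := LinearMap.ker (jetConditions hW hg (jetIndex W S))
  set Φ := (jetConditions hW hg (jetIndex W Sᶜ)).comp B.subtype
  have hker : Submodule.comap B.subtype
      (LinearMap.ker (jetConditions hW hg (jetIndex W Set.univ))) = LinearMap.ker Φ := by
    ext ⟨p, hp⟩
    rw [mem_ker_jetConditions] at hp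
    simp only [Submodule.mem_comap, Submodule.subtype_apply, Φ, LinearMap.mem_ker,
      LinearMap.comp_apply]
    rw [← LinearMap.mem_ker, ← LinearMap.mem_ker, mem_ker_jetConditions, mem_ker_jetConditions,
      jetIndex_univ hW S, Finset.forall_mem_union]
    exact and_iff_right hp
  rw [hker, Φ.quotKerEquivRange.finrank_eq, range_jetConditions_compl_eq_top hW hg hg0,
    finrank_top, Module.finrank_fintype_fun_eq_card, Fintype.card_coe, card_jetIndex]
  simp only [Set.mem_compl_iff]

open scoped Classical in
/-- the codimension of `Q_λ` in `Q_{λ,ℝ}` equals `|λ|` (the degree of `W_λ`)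
minus the total multiplicity of the real zeros of `W_λ`. -/
theorem stmt_6 (n : ℕ) (k : Fin n → ℕ) (hk : StrictAnti k) :
    Module.finrank ℂ
        (↥(Submodule.span ℂ (QlamRSet n k)) ⧸
          Submodule.comap (Submodule.span ℂ (QlamRSet n k)).subtype
            (Submodule.span ℂ (QlamSet n k))) =
      (Wlam n k).natDegree - Multiset.card ((Wlam n k).roots.filter fun z => z.im = 0) := by
  have hR : QlamRSet n k =
      quasiInvariantSet (Wlam n k) (fun z => Complex.exp (-z ^ 2 / 2)) {z | z.im = 0} := rfl
  have hA : QlamSet n k =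
      quasiInvariantSet (Wlam n k) (fun z => Complex.exp (-z ^ 2 / 2)) Set.univ := by
    ext p
    simp [QlamSet, quasiInvariantSet]
  rw [hR, hA, finrank_quasiInvariantSet_quotient (Wlam_ne_zero hk.injective) (by fun_prop)
    fun z => Complex.exp_ne_zero _, ← IsAlgClosed.card_roots_eq_natDegree]
  have hsplit := congrArg Multiset.card
    (Multiset.filter_add_not (fun z : ℂ => z.im = 0) (Wlam n k).roots)
  rw [Multiset.card_add] at hsplit
  simp only [Set.mem_ofPred_eq]
  omega
end QuasiInvariants
end
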